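/- arXiv:0902.3625 — 2 statements merged into one kernel-verified Lean document; each statement's English description precedes it below -/
import Mathlib

section
/- Let f : ℝ → ℝ be smooth with f(1)=f(−1)=0, f'(1)<0, f'(−1)<0, and ∫_{−1}^{u} f = ∫_{1}^{u} f < 0 for all u ∈ (−1,1); let θ₀ be the unique solution of θ₀'' + f(θ₀) = 0 on ℝ with θ₀(±∞)=±1, θ₀(0)=0, and set α = min{√(−f'(1)), √(−f'(−1))}. Then for every m ∈ ℕ there exist constants C_m, ρ₀ > 0 such that |d^m/dρ^m (θ₀(ρ) − 1)| ≤ C_m e^{−αρ} for all ρ ≥ ρ₀ and |d^m/dρ^m (θ₀(ρ) + 1)| ≤ C_m e^{αρ} for all ρ ≤ −ρ₀. -/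
open Set Filter MeasureTheory
open scoped Topology

lemma iter_deriv_neg (m : ℕ) : ∀ (F : ℝ → ℝ) (x : ℝ),
    deriv^[m] (fun z => -F z) x = -deriv^[m] F x := by
  induction m with
  | zero => intro F x; rfl
  | succ m ih =>
    intro F x
    rw [Function.iterate_succ_apply, Function.iterate_succ_apply]
    have h : (deriv fun z => -F z) = fun z => -deriv F z := funext fun z => deriv.neg
    rw [h, ih]

lemma iter_deriv_comp_neg (m : ℕ) : ∀ (F : ℝ → ℝ) (x : ℝ),
    deriv^[m] (fun z => F (-z)) x = (-1 : ℝ) ^ m * deriv^[m] F (-x) := by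
  induction m with
  | zero => intro F x; simp
  | succ m ih =>
    intro F x
    rw [Function.iterate_succ_apply, Function.iterate_succ_apply]
    have h1 : (deriv fun z => F (-z)) = fun z => (fun w => -deriv F w) (-z) :=
      funext fun z => deriv_comp_neg F z
    rw [h1, ih (fun w => -deriv F w) x, iter_deriv_neg]
    ring

lemma iter_deriv_congr (k : ℕ) : ∀ (F₁ F₂ : ℝ → ℝ) (s : Set ℝ), IsOpen s →
    (∀ y ∈ s, F₁ y = F₂ y) → ∀ x ∈ s, deriv^[k] F₁ x = deriv^[k] F₂ x := by
  induction k with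
  | zero => intro F₁ F₂ s _ h x hx; simpa using h x hx
  | succ k ih =>
    intro F₁ F₂ s hs h x hx
    rw [Function.iterate_succ_apply, Function.iterate_succ_apply]
    exact ih _ _ s hs (fun y hy =>
      Filter.EventuallyEq.deriv_eq (Filter.eventuallyEq_of_mem (hs.mem_nhds hy) h)) x hx

noncomputable def Dstep (f Q : ℝ → ℝ) (p : (ℝ → ℝ) × (ℝ → ℝ)) : (ℝ → ℝ) × (ℝ → ℝ) :=
  (fun u => 2 * Q u * deriv p.2 u - p.2 u * f u, deriv p.1)

set_option maxHeartbeats 1000000 in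
lemma main_decay (f θ : ℝ → ℝ) (hf : ContDiff ℝ (⊤ : ℕ∞) f) (hf1 : f 1 = 0)
    (hran : ∀ ρ, θ ρ ∈ Ioo (-1 : ℝ) 1)
    (heq : ∀ ρ, deriv (deriv θ) ρ = -f (θ ρ))
    (htop : Tendsto θ atTop (𝓝 1))
    (α : ℝ) (hα0 : 0 < α) (hαle : α ^ 2 ≤ -deriv f 1) (m : ℕ) :
    ∃ C > (0:ℝ), ∃ ρ₀ > (0:ℝ), ∀ ρ, ρ₀ ≤ ρ →
      |deriv^[m] (fun z => θ z - 1) ρ| ≤ C * Real.exp (-α * ρ) := by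
  -- basic facts about f
  set a : ℝ := -deriv f 1 with ha_def
  have ha : 0 < a := lt_of_lt_of_le (by positivity) hαle
  have hfs : ContDiff ℝ (⊤:ℕ∞) f := hf.of_le (by simp)
  have hfd : Differentiable ℝ f := hfs.differentiable (by simp)
  have hfc : Continuous f := hfd.continuous
  have hf' : ContDiff ℝ (⊤:ℕ∞) (deriv f) := (contDiff_infty_iff_deriv.mp hfs).2
  have hf'd : Differentiable ℝ (deriv f) := hf'.differentiable (by simp)
  have hf''c : Continuous (deriv (deriv f)) := ((contDiff_infty_iff_deriv.mp hf').2).continuous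
  -- bound on second derivative
  obtain ⟨M₀, hM₀⟩ := (isCompact_Icc (a := (0:ℝ)) (b := 1)).exists_bound_of_continuousOn
    hf''c.continuousOn
  set M : ℝ := max M₀ 1 with hM_def
  have hM1 : (1:ℝ) ≤ M := le_max_right _ _
  have hM : 0 < M := lt_of_lt_of_le one_pos hM1
  -- Lipschitz bound for deriv f near 1
  have hLip : ∀ u ∈ Icc (0:ℝ) 1, |deriv f u - deriv f 1| ≤ M * (1 - u) := by
    intro u hu
    have h1 : (1:ℝ) ∈ Icc (0:ℝ) 1 := by norm_num
    have h := Convex.norm_image_sub_le_of_norm_hasDerivWithin_le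
      (f := deriv f) (f' := deriv (deriv f)) (s := Icc (0:ℝ) 1) (C := M)
      (fun x _ => (hf'd x).hasDerivAt.hasDerivWithinAt)
      (fun x hx => le_trans (hM₀ x hx) (le_max_left _ _)) (convex_Icc _ _) h1 hu
    rw [Real.norm_eq_abs, Real.norm_eq_abs] at h
    calc |deriv f u - deriv f 1| ≤ M * |u - 1| := h
      _ = M * (1 - u) := by rw [abs_sub_comm, abs_of_nonneg (by linarith [hu.2])]
  -- Taylor bound for f near 1
  have hTay : ∀ u ∈ Icc (0:ℝ) 1, |f u - a * (1 - u)| ≤ M * (1 - u) ^ 2 := by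
    intro u hu
    have hu1 : u ≤ 1 := hu.2
    have hd : ∀ s ∈ Icc u 1, HasDerivWithinAt (fun s => f s - deriv f 1 * s)
        (deriv f s - deriv f 1) (Icc u 1) s := by
      intro s _
      have h2 : HasDerivAt (fun s : ℝ => deriv f 1 * s) (deriv f 1) s := by
        simpa using (hasDerivAt_id s).const_mul (deriv f 1)
      exact ((hfd s).hasDerivAt.sub h2).hasDerivWithinAt
    have hbound : ∀ s ∈ Icc u 1, ‖deriv f s - deriv f 1‖ ≤ M * (1 - u) := by
      intro s hs
      have hs' : s ∈ Icc (0:ℝ) 1 := ⟨le_trans hu.1 hs.1, hs.2⟩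
      have := hLip s hs'
      rw [Real.norm_eq_abs]
      have : M * (1 - s) ≤ M * (1 - u) := by nlinarith [hs.1]
      linarith [hLip s hs']
    have h := Convex.norm_image_sub_le_of_norm_hasDerivWithin_le hd hbound (convex_Icc u 1)
      (left_mem_Icc.mpr hu1) (right_mem_Icc.mpr hu1)
    rw [Real.norm_eq_abs, Real.norm_eq_abs] at h
    have hkey : (f 1 - deriv f 1 * 1) - (f u - deriv f 1 * u) = -(f u - a * (1 - u)) := by
      rw [hf1, ha_def]; ring
    have h1u : |(1:ℝ) - u| = 1 - u := abs_of_nonneg (by linarith)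
    rw [hkey, abs_neg, h1u] at h
    calc |f u - a * (1 - u)| ≤ M * (1 - u) * (1 - u) := h
      _ = M * (1 - u) ^ 2 := by ring
  -- the potential Q
  set Q : ℝ → ℝ := fun u => ∫ s in u..(1:ℝ), f s with hQ_def
  have hQ : ∀ u, HasDerivAt Q (-f u) u := by
    intro u
    have h1 : HasDerivAt (fun u => ∫ s in (1:ℝ)..u, f s) (f u) u :=
      intervalIntegral.integral_hasDerivAt_right (hfc.intervalIntegrable _ _)
        (hfc.stronglyMeasurableAtFilter _ _) hfc.continuousAt
    have h2 : Q = fun u => -∫ s in (1:ℝ)..u, f s := by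
      funext v
      rw [hQ_def]
      exact intervalIntegral.integral_symm 1 v
    rw [h2]
    exact h1.neg
  have hQcont : Continuous Q :=
    Differentiable.continuous fun u => (hQ u).differentiableAt
  have hQ1 : Q 1 = 0 := intervalIntegral.integral_same
  -- integral bounds on Q
  have hQbound : ∀ u ∈ Icc (0:ℝ) 1, |Q u - a * (1 - u) ^ 2 / 2| ≤ M * (1 - u) ^ 3 / 3 := by
    intro u hu
    have hu1 : u ≤ 1 := hu.2
    have hone : ∀ s : ℝ, HasDerivAt (fun s : ℝ => (1:ℝ) - s) (-1) s := fun s => by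
      simpa using (hasDerivAt_id s).const_sub 1
    have hF1 : ∀ s : ℝ, HasDerivAt (fun s : ℝ => -(a/2) * (1-s)^2) (a*(1-s)) s := by
      intro s
      have := ((hone s).fun_pow 2).const_mul (-(a/2))
      refine this.congr_deriv ?_
      push_cast
      ring
    have hF2 : ∀ s : ℝ, HasDerivAt (fun s : ℝ => -(M/3) * (1-s)^3) (M*(1-s)^2) s := by
      intro s
      have := ((hone s).fun_pow 3).const_mul (-(M/3))
      refine this.congr_deriv ?_
      push_cast
      ring
    have hcont1 : Continuous (fun s : ℝ => a*(1-s)) := by continuity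
    have hcont2 : Continuous (fun s : ℝ => M*(1-s)^2) := by continuity
    have hI1 : (∫ s in u..(1:ℝ), a*(1-s)) = a*(1-u)^2/2 := by
      rw [intervalIntegral.integral_eq_sub_of_hasDerivAt (fun s _ => hF1 s)
        (hcont1.intervalIntegrable _ _)]
      ring
    have hI2 : (∫ s in u..(1:ℝ), M*(1-s)^2) = M*(1-u)^3/3 := by
      rw [intervalIntegral.integral_eq_sub_of_hasDerivAt (fun s _ => hF2 s)
        (hcont2.intervalIntegrable _ _)]
      ring
    have hsplit : Q u - a*(1-u)^2/2 = ∫ s in u..(1:ℝ), (f s - a*(1-s)) := by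
      rw [intervalIntegral.integral_sub (hfc.intervalIntegrable _ _)
        (hcont1.intervalIntegrable _ _), hI1, hQ_def]
    have habs : |∫ s in u..(1:ℝ), (f s - a*(1-s))| ≤ ∫ s in u..(1:ℝ), |f s - a*(1-s)| :=
      intervalIntegral.abs_integral_le_integral_abs hu1
    have hmono : (∫ s in u..(1:ℝ), |f s - a*(1-s)|) ≤ ∫ s in u..(1:ℝ), M*(1-s)^2 := by
      apply intervalIntegral.integral_mono_on hu1
        ((hfc.sub hcont1).abs.intervalIntegrable _ _) (hcont2.intervalIntegrable _ _)
      intro s hs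
      exact hTay s ⟨le_trans hu.1 hs.1, hs.2⟩
    rw [hsplit]
    rw [hI2] at hmono
    linarith
  -- smallness scale
  set δ : ℝ := min 1 (α ^ 2 / (2 * M)) with hδ_def
  have hδpos : 0 < δ := lt_min one_pos (by positivity)
  have hδ1 : δ ≤ 1 := min_le_left _ _
  have hδ2 : δ ≤ α ^ 2 / (2 * M) := min_le_right _ _
  -- the ray where θ is close to 1
  obtain ⟨R₁, hR₁⟩ : ∃ R₁ : ℝ, ∀ ρ ≥ R₁, 1 - δ < θ ρ := by
    have := htop.eventually (eventually_gt_nhds (show 1 - δ < 1 by linarith))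
    rw [eventually_atTop] at this; exact this
  have hmem : ∀ ρ ≥ R₁, θ ρ ∈ Icc (0:ℝ) 1 := by
    intro ρ hρ
    have h1 := hR₁ ρ hρ
    have h2 := (hran ρ).2
    constructor <;> [linarith; linarith]
  have hsmall : ∀ ρ ≥ R₁, 0 < 1 - θ ρ ∧ 1 - θ ρ < δ := by
    intro ρ hρ
    have h1 := hR₁ ρ hρ
    have h2 := (hran ρ).2
    constructor <;> linarith
  have hMh : ∀ ρ ≥ R₁, M * (1 - θ ρ) ≤ α^2/2 := by
    intro ρ hρ
    have h2 := (hsmall ρ hρ).2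
    have hδa : δ * (2*M) ≤ α^2 := by
      have h2M : (2*M) ≠ 0 := by positivity
      have := mul_le_mul_of_nonneg_right hδ2 (le_of_lt (show (0:ℝ) < 2*M by positivity))
      rwa [div_mul_cancel₀ _ h2M] at this
    nlinarith [mul_lt_mul_of_pos_left h2 hM]
  -- positivity of f along the orbit
  have hfθpos : ∀ ρ ≥ R₁, 0 < f (θ ρ) := by
    intro ρ hρ
    obtain ⟨h1, h2⟩ := hsmall ρ hρ
    have ht := abs_le.mp (hTay (θ ρ) (hmem ρ hρ))
    have hm := hMh ρ hρ
    -- f u ≥ a h − M h² and M h² = (Mh)h ≤ (α²/2) h ≤ (a/2) h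
    have e2 := mul_le_mul_of_nonneg_right hm (le_of_lt h1)
    have e3 := mul_le_mul_of_nonneg_right hαle (le_of_lt h1)
    linarith [ht.1, e2, e3, mul_pos ha h1]
  -- differentiability of g on the ray
  set g : ℝ → ℝ := deriv θ with hg_def
  have hgd : ∀ ρ ≥ R₁, HasDerivAt g (-f (θ ρ)) ρ := by
    intro ρ hρ
    have hdiff : DifferentiableAt ℝ g ρ := by
      by_contra hc
      have := deriv_zero_of_not_differentiableAt hc
      rw [heq ρ] at this
      have := hfθpos ρ hρ
      linarith
    have := hdiff.hasDerivAt
    rw [heq ρ] at this; exact this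
  have hganti : StrictAntiOn g (Ici R₁) := by
    apply strictAntiOn_of_deriv_neg (convex_Ici _)
    · exact fun ρ hρ => ((hgd ρ hρ).differentiableAt.continuousAt).continuousWithinAt
    · intro ρ hρ
      rw [interior_Ici] at hρ
      rw [heq ρ]
      have := hfθpos ρ (le_of_lt hρ)
      linarith
  -- θ is differentiable on a ray
  obtain ⟨R₂, hR₂₁, hθd⟩ : ∃ R₂ ≥ R₁, ∀ ρ ≥ R₂, DifferentiableAt ℝ θ ρ := by
    by_cases hN : ∃ x ≥ R₁, ¬DifferentiableAt ℝ θ x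
    · obtain ⟨x, hx, hxd⟩ := hN
      refine ⟨max R₁ (x+1), le_max_left _ _, ?_⟩
      intro ρ hρ
      by_contra hc
      have hρ1 : R₁ ≤ ρ := le_trans (le_max_left _ _) hρ
      have h1 : g ρ = 0 := deriv_zero_of_not_differentiableAt hc
      have h2 : g x = 0 := deriv_zero_of_not_differentiableAt hxd
      have hρx : ρ = x := hganti.injOn hρ1 hx (h1.trans h2.symm)
      have : x + 1 ≤ ρ := le_trans (le_max_right _ _) hρ
      linarith [hρx ▸ this]
    · push_neg at hN
      exact ⟨R₁, le_rfl, hN⟩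
  have hθdd : ∀ ρ ≥ R₂, HasDerivAt θ (g ρ) ρ := fun ρ hρ => (hθd ρ hρ).hasDerivAt
  -- no uniform positive lower bound on g
  have hup : ¬ ∃ b > (0:ℝ), ∀ ρ ≥ R₂, b ≤ g ρ := by
    rintro ⟨b, hb, hball⟩
    have hφ : ∀ x ≥ R₂, HasDerivAt (fun ρ => θ ρ - b * ρ) (g x - b) x := by
      intro x hx
      have h2 : HasDerivAt (fun ρ : ℝ => b * ρ) b x := by
        simpa using (hasDerivAt_id x).const_mul b
      exact (hθdd x hx).sub h2
    have hmono : MonotoneOn (fun ρ => θ ρ - b * ρ) (Ici R₂) := by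
      apply monotoneOn_of_deriv_nonneg (convex_Ici _)
      · exact fun x hx => (hφ x hx).continuousAt.continuousWithinAt
      · intro x hx
        rw [interior_Ici] at hx
        exact (hφ x hx.le).differentiableAt.differentiableWithinAt
      · intro x hx
        rw [interior_Ici] at hx
        rw [(hφ x hx.le).deriv]
        linarith [hball x hx.le]
    set T := R₂ + 3/b with hT_def
    have hTmem : T ∈ Ici R₂ := by
      simp only [hT_def, mem_Ici]
      have : 0 < 3/b := by positivity
      linarith
    have := hmono (self_mem_Ici) hTmem (by simpa using hTmem)
    have hbT : b * T = b * R₂ + 3 := by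
      rw [hT_def]; field_simp
    have h1 := (hran T).2
    have h2 := (hran R₂).1
    simp only [] at this
    nlinarith
  -- g is nonnegative on the ray
  have hgnn : ∀ ρ ≥ R₂, 0 ≤ g ρ := by
    intro ρ hρ
    by_contra hc
    push_neg at hc
    have hφ : ∀ x ≥ ρ, HasDerivAt (fun ρ' => θ ρ' - g ρ * ρ') (g x - g ρ) x := by
      intro x hx
      have h2 : HasDerivAt (fun ρ' : ℝ => g ρ * ρ') (g ρ) x := by
        simpa using (hasDerivAt_id x).const_mul (g ρ)
      exact (hθdd x (le_trans hρ hx)).sub h2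
    have hanti : AntitoneOn (fun ρ' => θ ρ' - g ρ * ρ') (Ici ρ) := by
      apply antitoneOn_of_deriv_nonpos (convex_Ici _)
      · exact fun x hx => (hφ x hx).continuousAt.continuousWithinAt
      · intro x hx
        rw [interior_Ici] at hx
        exact (hφ x hx.le).differentiableAt.differentiableWithinAt
      · intro x hx
        rw [interior_Ici] at hx
        rw [(hφ x hx.le).deriv]
        have : g x < g ρ := hganti (le_trans hR₂₁ hρ) (le_trans (le_trans hR₂₁ hρ) hx.le) hx
        linarith
    set c : ℝ := -g ρ with hc_def
    have hcpos : 0 < c := by simp [hc_def]; linarith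
    set T := ρ + 3/c with hT_def
    have hTmem : T ∈ Ici ρ := by
      simp only [hT_def, mem_Ici]
      have : 0 < 3/c := by positivity
      linarith
    have hT := hanti (self_mem_Ici) hTmem (by simpa using hTmem)
    have hgT : g ρ * T = g ρ * ρ - 3 := by
      rw [hT_def, hc_def]
      field_simp [hc.ne]
      ring
    have h1 := (hran T).1
    have h2 := (hran ρ).2
    simp only [] at hT
    nlinarith
  -- energy identity
  have hEnergy : ∀ ρ ≥ R₂, g ρ ^ 2 = 2 * Q (θ ρ) := by
    have hE' : ∀ x ≥ R₂, HasDerivAt (fun ρ => g ρ ^ 2 - 2 * Q (θ ρ)) 0 x := by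
      intro x hx
      have h1 := (hgd x (le_trans hR₂₁ hx)).fun_pow 2
      have h2 : HasDerivAt (fun ρ => Q (θ ρ)) (-f (θ x) * g x) x :=
        (hQ (θ x)).comp x (hθdd x hx)
      have h3 := h1.fun_sub (h2.const_mul 2)
      refine h3.congr_deriv ?_
      push_cast
      ring
    have hconst : ∀ ρ ≥ R₂, g ρ ^ 2 - 2 * Q (θ ρ) = g R₂ ^ 2 - 2 * Q (θ R₂) := by
      intro ρ hρ
      have hmono := monotoneOn_of_deriv_nonneg (convex_Ici R₂)
        (fun x hx => (hE' x hx).continuousAt.continuousWithinAt)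
        (fun x hx => by
          rw [interior_Ici] at hx
          exact (hE' x hx.le).differentiableAt.differentiableWithinAt)
        (fun x hx => by
          rw [interior_Ici] at hx
          rw [(hE' x hx.le).deriv])
      have hanti := antitoneOn_of_deriv_nonpos (convex_Ici R₂)
        (fun x hx => (hE' x hx).continuousAt.continuousWithinAt)
        (fun x hx => by
          rw [interior_Ici] at hx
          exact (hE' x hx.le).differentiableAt.differentiableWithinAt)
        (fun x hx => by
          rw [interior_Ici] at hx
          rw [(hE' x hx.le).deriv])
      exact le_antisymm (hanti self_mem_Ici hρ hρ) (hmono self_mem_Ici hρ hρ)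
    have htendQ : Tendsto (fun ρ => 2 * Q (θ ρ)) atTop (𝓝 0) := by
      have h1 : Tendsto (fun ρ => Q (θ ρ)) atTop (𝓝 (Q 1)) :=
        (hQcont.continuousAt.tendsto).comp htop
      rw [hQ1] at h1
      simpa using h1.const_mul 2
    set c : ℝ := g R₂ ^ 2 - 2 * Q (θ R₂) with hc_def
    have htendg : Tendsto (fun ρ => g ρ ^ 2) atTop (𝓝 c) := by
      have he : ∀ᶠ ρ in atTop, c + 2 * Q (θ ρ) = g ρ ^ 2 := by
        filter_upwards [eventually_ge_atTop R₂] with ρ hρ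
        have := hconst ρ hρ
        linarith
      have h2 := (tendsto_const_nhds (x := c) (f := atTop (α := ℝ))).add htendQ
      rw [add_zero] at h2
      exact Tendsto.congr' he h2
    have hcnn : 0 ≤ c := ge_of_tendsto htendg (by filter_upwards with ρ using sq_nonneg _)
    have hcnp : ¬ 0 < c := by
      intro hc
      apply hup
      refine ⟨Real.sqrt c, Real.sqrt_pos.mpr hc, fun ρ hρ => ?_⟩
      have hsq : c ≤ g ρ ^ 2 := by
        apply le_of_tendsto htendg
        filter_upwards [eventually_ge_atTop ρ] with ρ' hρ'
        have hρ1 : R₁ ≤ ρ := le_trans hR₂₁ hρ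
        have h1 : g ρ' ≤ g ρ := (hganti.antitoneOn) hρ1 (le_trans hρ1 hρ') hρ'
        have h2 : 0 ≤ g ρ' := hgnn ρ' (le_trans hρ hρ')
        nlinarith
      calc Real.sqrt c ≤ Real.sqrt (g ρ ^ 2) := Real.sqrt_le_sqrt hsq
        _ = g ρ := by rw [Real.sqrt_sq (hgnn ρ hρ)]
    have hc0 : c = 0 := le_antisymm (not_lt.mp hcnp) hcnn
    intro ρ hρ
    have h5 := hconst ρ hρ
    rw [hc0] at h5
    linarith
  -- lower bound for g
  have hg_low : ∀ ρ ≥ R₂, α * (1 - θ ρ) - M / α * (1 - θ ρ) ^ 2 ≤ g ρ := by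
    intro ρ hρ
    have hρ1 : R₁ ≤ ρ := le_trans hR₂₁ hρ
    obtain ⟨h1, h2⟩ := hsmall ρ hρ1
    have hQb := abs_le.mp (hQbound (θ ρ) (hmem ρ hρ1))
    have hE := hEnergy ρ hρ
    have hm := hMh ρ hρ1
    have hgnn' := hgnn ρ hρ
    have hg2 : α^2 * (1 - θ ρ)^2 - M * (1 - θ ρ)^3 ≤ g ρ ^ 2 := by
      have e3 := mul_le_mul_of_nonneg_right hαle (sq_nonneg (1 - θ ρ))
      have e6 := mul_pos hM (pow_pos h1 3)
      nlinarith [hQb.1, e3, hE, e6]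
    by_cases hcase : α * (1 - θ ρ) - M / α * (1 - θ ρ)^2 ≤ 0
    · linarith
    · push_neg at hcase
      have ht2 : (α * (1 - θ ρ) - M / α * (1 - θ ρ)^2)^2 ≤ g ρ ^ 2 := by
        have hkey : (M / α)^2 * (1 - θ ρ) ≤ M / 2 := by
          have hα2 : 0 < α^2 := by positivity
          rw [div_pow, div_mul_eq_mul_div, div_le_div_iff₀ hα2 two_pos]
          nlinarith [hm, hM]
        have e4 := mul_le_mul_of_nonneg_right hkey
          (by positivity : (0:ℝ) ≤ (1 - θ ρ)^3)
        have e5 : α * (M / α) * (1 - θ ρ)^3 = M * (1 - θ ρ)^3 := by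
          field_simp
        have e6 := mul_pos hM (pow_pos h1 3)
        nlinarith [hg2, e4, e5, e6]
      nlinarith [ht2, hgnn', hcase]
  -- upper bound for g
  have hg_up : ∀ ρ ≥ R₂, g ρ ≤ Real.sqrt (a + M) * (1 - θ ρ) := by
    intro ρ hρ
    have hρ1 : R₁ ≤ ρ := le_trans hR₂₁ hρ
    obtain ⟨h1, h2⟩ := hsmall ρ hρ1
    have hQb := abs_le.mp (hQbound (θ ρ) (hmem ρ hρ1))
    have hE := hEnergy ρ hρ
    have hδ1' : 1 - θ ρ ≤ 1 := by linarith
    have hg2 : g ρ ^ 2 ≤ (a + M) * (1 - θ ρ)^2 := by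
      have e1 := mul_le_mul_of_nonneg_left hδ1'
        (by positivity : (0:ℝ) ≤ M * (1 - θ ρ)^2)
      have e2 : (0:ℝ) ≤ M * (1 - θ ρ)^3 := by positivity
      nlinarith [hQb.2, hE, e1, e2]
    calc g ρ = Real.sqrt (g ρ ^ 2) := (Real.sqrt_sq (hgnn ρ hρ)).symm
      _ ≤ Real.sqrt ((a + M) * (1 - θ ρ)^2) := Real.sqrt_le_sqrt hg2
      _ = Real.sqrt (a + M) * (1 - θ ρ) := by
          rw [Real.sqrt_mul (by positivity), Real.sqrt_sq h1.le]
  -- crude exponential decay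
  obtain ⟨C₁, hC₁pos, hcrude⟩ : ∃ C₁ > (0:ℝ), ∀ ρ ≥ R₂,
      1 - θ ρ ≤ C₁ * Real.exp (-(α / 2) * ρ) := by
    have hexp : ∀ x : ℝ, HasDerivAt (fun ρ : ℝ => Real.exp ((α/2) * ρ))
        (Real.exp ((α/2) * x) * (α/2)) x := by
      intro x
      simpa using (((hasDerivAt_id x).const_mul (α/2)).exp)
    have hwd : ∀ x ≥ R₂, HasDerivAt (fun ρ => (1 - θ ρ) * Real.exp ((α/2) * ρ))
        ((-(g x) + (α/2) * (1 - θ x)) * Real.exp ((α/2) * x)) x := by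
      intro x hx
      have h1 : HasDerivAt (fun ρ => 1 - θ ρ) (-(g x)) x := (hθdd x hx).const_sub 1
      have h3 := h1.fun_mul (hexp x)
      refine h3.congr_deriv ?_
      ring
    have hanti : AntitoneOn (fun ρ => (1 - θ ρ) * Real.exp ((α/2) * ρ)) (Ici R₂) := by
      apply antitoneOn_of_deriv_nonpos (convex_Ici _)
        (fun x hx => (hwd x hx).continuousAt.continuousWithinAt)
        (fun x hx => by
          rw [interior_Ici] at hx
          exact (hwd x hx.le).differentiableAt.differentiableWithinAt)
      intro x hx
      rw [interior_Ici] at hx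
      rw [(hwd x hx.le).deriv]
      have hlow := hg_low x hx.le
      have hm := hMh x (le_trans hR₂₁ hx.le)
      obtain ⟨h1, h2⟩ := hsmall x (le_trans hR₂₁ hx.le)
      have hexppos := Real.exp_pos ((α/2) * x)
      have hkey : M / α * (1 - θ x)^2 ≤ α/2 * (1 - θ x) := by
        have h4 := mul_le_mul_of_nonneg_right hm
          (show (0:ℝ) ≤ (1 - θ x)/α by positivity)
        have e1 : M * (1 - θ x) * ((1 - θ x)/α) = M / α * (1 - θ x)^2 := by
          field_simp
        have e2 : α^2/2 * ((1 - θ x)/α) = α/2 * (1 - θ x) := by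
          field_simp
        rw [e1, e2] at h4
        exact h4
      have hmain : -(g x) + α/2 * (1 - θ x) ≤ 0 := by linarith
      have h6 := mul_le_mul_of_nonneg_right hmain hexppos.le
      simpa using h6
    have hC₁pos : 0 < (1 - θ R₂) * Real.exp ((α/2) * R₂) :=
      mul_pos (hsmall R₂ hR₂₁).1 (Real.exp_pos _)
    refine ⟨(1 - θ R₂) * Real.exp ((α/2) * R₂), hC₁pos, fun ρ hρ => ?_⟩
    have h8 : (1 - θ ρ) * Real.exp ((α/2) * ρ) ≤ (1 - θ R₂) * Real.exp ((α/2) * R₂) :=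
      hanti self_mem_Ici hρ hρ
    have h9 := mul_le_mul_of_nonneg_right h8 (Real.exp_pos (-(α/2) * ρ)).le
    calc 1 - θ ρ = (1 - θ ρ) * Real.exp ((α/2) * ρ) * Real.exp (-(α/2) * ρ) := by
          rw [mul_assoc, ← Real.exp_add, show (α/2) * ρ + -(α/2) * ρ = 0 by ring,
            Real.exp_zero, mul_one]
      _ ≤ (1 - θ R₂) * Real.exp ((α/2) * R₂) * Real.exp (-(α/2) * ρ) := h9
  -- sharp exponential decay
  obtain ⟨C₀, hC₀pos, hhbound⟩ : ∃ C₀ > (0:ℝ), ∀ ρ ≥ R₂,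
      1 - θ ρ ≤ C₀ * Real.exp (-α * ρ) := by
    set β : ℝ := α/2 with hβ_def
    have hβpos : 0 < β := by positivity
    set K : ℝ := M / α * C₁ with hK_def
    have hKnn : 0 ≤ K := mul_nonneg (by positivity) hC₁pos.le
    set ψ : ℝ → ℝ := fun ρ => α * ρ + K / β * Real.exp (-β * ρ) with hψ_def
    have hψρ : ∀ ρ, ψ ρ = α * ρ + K / β * Real.exp (-β * ρ) := fun ρ => rfl
    have hψd : ∀ x : ℝ, HasDerivAt ψ (α - K * Real.exp (-β * x)) x := by
      intro x
      have h1 : HasDerivAt (fun ρ : ℝ => Real.exp (-β * ρ))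
          (Real.exp (-β * x) * (-β)) x := by
        simpa using ((hasDerivAt_id x).const_mul (-β)).exp
      have h2 : HasDerivAt (fun ρ : ℝ => α * ρ) α x := by
        simpa using (hasDerivAt_id x).const_mul α
      have h3 := h2.fun_add (h1.const_mul (K / β))
      refine h3.congr_deriv ?_
      field_simp
      ring
    have hwd : ∀ x ≥ R₂, HasDerivAt (fun ρ => (1 - θ ρ) * Real.exp (ψ ρ))
        ((-(g x) + (1 - θ x) * (α - K * Real.exp (-β * x))) * Real.exp (ψ x)) x := by
      intro x hx
      have h1 : HasDerivAt (fun ρ => 1 - θ ρ) (-(g x)) x := (hθdd x hx).const_sub 1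
      have h2 := (hψd x).exp
      have h3 := h1.fun_mul h2
      refine h3.congr_deriv ?_
      ring
    have hanti : AntitoneOn (fun ρ => (1 - θ ρ) * Real.exp (ψ ρ)) (Ici R₂) := by
      apply antitoneOn_of_deriv_nonpos (convex_Ici _)
        (fun x hx => (hwd x hx).continuousAt.continuousWithinAt)
        (fun x hx => by
          rw [interior_Ici] at hx
          exact (hwd x hx.le).differentiableAt.differentiableWithinAt)
      intro x hx
      rw [interior_Ici] at hx
      rw [(hwd x hx.le).deriv]
      have hlow := hg_low x hx.le
      obtain ⟨h1, h2⟩ := hsmall x (le_trans hR₂₁ hx.le)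
      have hcr := hcrude x hx.le
      have hkey : M / α * (1 - θ x)^2 ≤ K * Real.exp (-β * x) * (1 - θ x) := by
        have h4 := mul_le_mul_of_nonneg_right hcr
          (mul_nonneg (by positivity : (0:ℝ) ≤ M / α) h1.le)
        calc M / α * (1 - θ x)^2 = (1 - θ x) * (M / α * (1 - θ x)) := by ring
          _ ≤ C₁ * Real.exp (-(α/2) * x) * (M / α * (1 - θ x)) := h4
          _ = K * Real.exp (-β * x) * (1 - θ x) := by rw [hK_def, hβ_def]; ring
      have hmain : -(g x) + (1 - θ x) * (α - K * Real.exp (-β * x)) ≤ 0 := by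
        nlinarith [hlow, hkey]
      have h6 := mul_le_mul_of_nonneg_right hmain (Real.exp_pos (ψ x)).le
      simpa using h6
    have hC₀pos : 0 < (1 - θ R₂) * Real.exp (ψ R₂) :=
      mul_pos (hsmall R₂ hR₂₁).1 (Real.exp_pos _)
    refine ⟨(1 - θ R₂) * Real.exp (ψ R₂), hC₀pos, fun ρ hρ => ?_⟩
    have h8 : (1 - θ ρ) * Real.exp (ψ ρ) ≤ (1 - θ R₂) * Real.exp (ψ R₂) :=
      hanti self_mem_Ici hρ hρ
    have h9 := mul_le_mul_of_nonneg_right h8 (Real.exp_pos (-ψ ρ)).le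
    have h10 : (1 - θ ρ) * Real.exp (ψ ρ) * Real.exp (-ψ ρ) = 1 - θ ρ := by
      rw [mul_assoc, ← Real.exp_add, show ψ ρ + -ψ ρ = 0 by ring, Real.exp_zero, mul_one]
    rw [h10] at h9
    have h11 : Real.exp (-ψ ρ) ≤ Real.exp (-α * ρ) := by
      apply Real.exp_le_exp.mpr
      have h12 : 0 ≤ K / β * Real.exp (-β * ρ) :=
        mul_nonneg (div_nonneg hKnn hβpos.le) (Real.exp_pos _).le
      rw [hψρ ρ]
      linarith
    calc 1 - θ ρ ≤ (1 - θ R₂) * Real.exp (ψ R₂) * Real.exp (-ψ ρ) := h9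
      _ ≤ (1 - θ R₂) * Real.exp (ψ R₂) * Real.exp (-α * ρ) :=
          mul_le_mul_of_nonneg_left h11 hC₀pos.le
  -- smoothness of Q
  have hQsmooth : ContDiff ℝ (⊤:ℕ∞) Q := by
    apply contDiff_infty_iff_deriv.mpr
    constructor
    · exact fun u => (hQ u).differentiableAt
    · have hQderiv : deriv Q = fun u => -f u := funext fun u => (hQ u).deriv
      rw [hQderiv]
      exact hfs.neg
  -- the iteration scheme
  have hDsmooth : ∀ p : (ℝ → ℝ) × (ℝ → ℝ), ContDiff ℝ (⊤:ℕ∞) p.1 → ContDiff ℝ (⊤:ℕ∞) p.2 →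
      ContDiff ℝ (⊤:ℕ∞) (Dstep f Q p).1 ∧ ContDiff ℝ (⊤:ℕ∞) (Dstep f Q p).2 := by
    intro p hp1 hp2
    constructor
    · exact ((contDiff_const.mul hQsmooth).mul (contDiff_infty_iff_deriv.mp hp2).2).sub
        (hp2.mul hfs)
    · exact (contDiff_infty_iff_deriv.mp hp1).2
  have hdiffp : ∀ q : ℝ → ℝ, ContDiff ℝ (⊤:ℕ∞) q → Differentiable ℝ q :=
    fun q hq => hq.differentiable (by simp)
  have hA : ∀ p : (ℝ → ℝ) × (ℝ → ℝ), ContDiff ℝ (⊤:ℕ∞) p.1 → ContDiff ℝ (⊤:ℕ∞) p.2 →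
      ∀ ρ ∈ Ioi R₂, HasDerivAt (fun z => p.1 (θ z) + p.2 (θ z) * g z)
        ((Dstep f Q p).1 (θ ρ) + (Dstep f Q p).2 (θ ρ) * g ρ) ρ := by
    intro p hp1 hp2 ρ hρ
    have hρ2 : R₂ ≤ ρ := le_of_lt hρ
    have hρ1 : R₁ ≤ ρ := le_trans hR₂₁ hρ2
    have d1 : HasDerivAt (fun z => p.1 (θ z)) (deriv p.1 (θ ρ) * g ρ) ρ :=
      ((hdiffp p.1 hp1 (θ ρ)).hasDerivAt).comp ρ (hθdd ρ hρ2)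
    have d2 : HasDerivAt (fun z => p.2 (θ z)) (deriv p.2 (θ ρ) * g ρ) ρ :=
      ((hdiffp p.2 hp2 (θ ρ)).hasDerivAt).comp ρ (hθdd ρ hρ2)
    have d3 := d2.fun_mul (hgd ρ hρ1)
    have d4 := d1.fun_add d3
    refine d4.congr_deriv (Eq.symm ?_)
    have hE := hEnergy ρ hρ2
    have hgg : g ρ * g ρ = 2 * Q (θ ρ) := by rw [← hE]; ring
    show (2 * Q (θ ρ) * deriv p.2 (θ ρ) - p.2 (θ ρ) * f (θ ρ)) + deriv p.1 (θ ρ) * g ρ = _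
    rw [← hgg]
    ring
  have hB : ∀ k (p : (ℝ → ℝ) × (ℝ → ℝ)), ContDiff ℝ (⊤:ℕ∞) p.1 → ContDiff ℝ (⊤:ℕ∞) p.2 →
      ∀ ρ ∈ Ioi R₂, deriv^[k] (fun z => p.1 (θ z) + p.2 (θ z) * g z) ρ =
        ((Dstep f Q)^[k] p).1 (θ ρ) + ((Dstep f Q)^[k] p).2 (θ ρ) * g ρ := by
    intro k
    induction k with
    | zero => intro p _ _ ρ _; simp
    | succ k ih =>
      intro p hp1 hp2 ρ hρ
      rw [Function.iterate_succ_apply]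
      have hstep : ∀ y ∈ Ioi R₂, deriv (fun z => p.1 (θ z) + p.2 (θ z) * g z) y =
          (fun z => (Dstep f Q p).1 (θ z) + (Dstep f Q p).2 (θ z) * g z) y :=
        fun y hy => (hA p hp1 hp2 y hy).deriv
      rw [iter_deriv_congr k _ _ _ isOpen_Ioi hstep ρ hρ]
      rw [ih (Dstep f Q p) (hDsmooth p hp1 hp2).1 (hDsmooth p hp1 hp2).2 ρ hρ]
      rw [← Function.iterate_succ_apply]
  -- the starting pair
  set p₀ : (ℝ → ℝ) × (ℝ → ℝ) := (fun u => u - 1, fun _ => (0:ℝ)) with hp₀_def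
  have hp₀1 : ContDiff ℝ (⊤:ℕ∞) p₀.1 := contDiff_id.sub contDiff_const
  have hp₀2 : ContDiff ℝ (⊤:ℕ∞) p₀.2 := contDiff_const
  have hitsmooth : ∀ k, ContDiff ℝ (⊤:ℕ∞) ((Dstep f Q)^[k] p₀).1 ∧
      ContDiff ℝ (⊤:ℕ∞) ((Dstep f Q)^[k] p₀).2 := by
    intro k
    induction k with
    | zero => exact ⟨hp₀1, hp₀2⟩
    | succ k ih =>
      rw [Function.iterate_succ_apply']
      exact hDsmooth _ ih.1 ih.2
  have hvanish : ∀ k, ((Dstep f Q)^[k] p₀).1 1 = 0 := by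
    intro k
    cases k with
    | zero => simp [hp₀_def]
    | succ k =>
      rw [Function.iterate_succ_apply']
      show 2 * Q 1 * _ - _ * f 1 = 0
      rw [hQ1, hf1]; ring
  -- final bounds
  obtain ⟨B₁, hB₁⟩ := (isCompact_Icc (a := (-1:ℝ)) (b := 1)).exists_bound_of_continuousOn
    ((contDiff_infty_iff_deriv.mp (hitsmooth m).1).2.continuous.continuousOn)
  obtain ⟨B₂, hB₂⟩ := (isCompact_Icc (a := (-1:ℝ)) (b := 1)).exists_bound_of_continuousOn
    ((hitsmooth m).2.continuous.continuousOn)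
  have h1mem : (1:ℝ) ∈ Icc (-1:ℝ) 1 := by norm_num
  have hB₁nn : 0 ≤ B₁ := le_trans (norm_nonneg _) (hB₁ 1 h1mem)
  have hB₂nn : 0 ≤ B₂ := le_trans (norm_nonneg _) (hB₂ 1 h1mem)
  have hknn : 0 ≤ Real.sqrt (a + M) := Real.sqrt_nonneg _
  have hCpos : 0 < B₁ * C₀ + B₂ * (Real.sqrt (a + M) * C₀) + 1 := by
    have e1 : 0 ≤ B₁ * C₀ := mul_nonneg hB₁nn hC₀pos.le
    have e2 : 0 ≤ B₂ * (Real.sqrt (a + M) * C₀) :=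
      mul_nonneg hB₂nn (mul_nonneg hknn hC₀pos.le)
    linarith
  refine ⟨B₁ * C₀ + B₂ * (Real.sqrt (a + M) * C₀) + 1, hCpos, max (R₂ + 1) 1,
    lt_of_lt_of_le one_pos (le_max_right _ _), fun ρ hρ => ?_⟩
  have hρ2 : R₂ < ρ := by
    have := le_trans (le_max_left _ _) hρ
    linarith
  have hfun : (fun z => θ z - 1) = (fun z => p₀.1 (θ z) + p₀.2 (θ z) * g z) := by
    funext z
    show θ z - 1 = (θ z - 1) + 0 * g z
    ring
  rw [hfun, hB m p₀ hp₀1 hp₀2 ρ hρ2]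
  set p : (ℝ → ℝ) × (ℝ → ℝ) := (Dstep f Q)^[m] p₀ with hp_def
  have hθIcc : θ ρ ∈ Icc (-1:ℝ) 1 := ⟨(hran ρ).1.le, (hran ρ).2.le⟩
  have hp1bound : |p.1 (θ ρ)| ≤ B₁ * (1 - θ ρ) := by
    have h := Convex.norm_image_sub_le_of_norm_hasDerivWithin_le
      (f := p.1) (f' := deriv p.1) (s := Icc (-1:ℝ) 1) (C := B₁)
      (fun x _ => ((hdiffp p.1 (hitsmooth m).1) x).hasDerivAt.hasDerivWithinAt)
      (fun x hx => hB₁ x hx) (convex_Icc _ _) h1mem hθIcc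
    rw [Real.norm_eq_abs] at h
    rw [hvanish m, sub_zero] at h
    calc |p.1 (θ ρ)| ≤ B₁ * ‖θ ρ - 1‖ := h
      _ = B₁ * (1 - θ ρ) := by
          rw [Real.norm_eq_abs, abs_sub_comm, abs_of_nonneg (by linarith [(hran ρ).2])]
  have hp2bound : |p.2 (θ ρ)| ≤ B₂ := by
    have := hB₂ (θ ρ) hθIcc
    rwa [Real.norm_eq_abs] at this
  have hhb := hhbound ρ hρ2.le
  have hgb : g ρ ≤ Real.sqrt (a + M) * (C₀ * Real.exp (-α * ρ)) := by
    calc g ρ ≤ Real.sqrt (a + M) * (1 - θ ρ) := hg_up ρ hρ2.le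
      _ ≤ Real.sqrt (a + M) * (C₀ * Real.exp (-α * ρ)) :=
          mul_le_mul_of_nonneg_left hhb hknn
  have hgabs : |g ρ| = g ρ := abs_of_nonneg (hgnn ρ hρ2.le)
  have hsmallρ := (hsmall ρ (le_trans hR₂₁ hρ2.le)).1
  calc |p.1 (θ ρ) + p.2 (θ ρ) * g ρ| ≤ |p.1 (θ ρ)| + |p.2 (θ ρ)| * |g ρ| := by
        calc |p.1 (θ ρ) + p.2 (θ ρ) * g ρ| ≤ |p.1 (θ ρ)| + |p.2 (θ ρ) * g ρ| := abs_add_le _ _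
          _ = |p.1 (θ ρ)| + |p.2 (θ ρ)| * |g ρ| := by rw [abs_mul]
    _ ≤ B₁ * (C₀ * Real.exp (-α * ρ)) + B₂ * (Real.sqrt (a + M) * (C₀ * Real.exp (-α * ρ))) := by
        have e1 : |p.1 (θ ρ)| ≤ B₁ * (C₀ * Real.exp (-α * ρ)) :=
          le_trans hp1bound (mul_le_mul_of_nonneg_left hhb hB₁nn)
        have e2 : |p.2 (θ ρ)| * |g ρ| ≤ B₂ * (Real.sqrt (a + M) * (C₀ * Real.exp (-α * ρ))) := by
          rw [hgabs]
          apply mul_le_mul hp2bound hgb (hgnn ρ hρ2.le) hB₂nn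
        linarith
    _ ≤ (B₁ * C₀ + B₂ * (Real.sqrt (a + M) * C₀) + 1) * Real.exp (-α * ρ) := by
        have := (Real.exp_pos (-α * ρ)).le
        nlinarith [Real.exp_pos (-α * ρ)]

/-- Exponential decay, with all derivatives, of the standing wave
profile `θ₀` towards `±1` at `±∞`, at rate `α = min (√(-f'(1)), √(-f'(-1)))`. -/
theorem stmt_9 (f θ₀ : ℝ → ℝ)
    (hf : ContDiff ℝ (⊤ : ℕ∞) f) (hf1 : f 1 = 0) (hfm1 : f (-1) = 0)
    (hf1' : deriv f 1 < 0) (hfm1' : deriv f (-1) < 0)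
    (hW : ∀ u ∈ Ioo (-1 : ℝ) 1,
      (∫ s in (-1 : ℝ)..u, f s) = (∫ s in (1 : ℝ)..u, f s) ∧ (∫ s in (-1 : ℝ)..u, f s) < 0)
    (hθ₀ran : ∀ ρ, θ₀ ρ ∈ Ioo (-1 : ℝ) 1)
    (hθ₀eq : ∀ ρ, deriv (deriv θ₀) ρ + f (θ₀ ρ) = 0)
    (hθ₀top : Tendsto θ₀ atTop (𝓝 1)) (hθ₀bot : Tendsto θ₀ atBot (𝓝 (-1)))
    (hθ₀0 : θ₀ 0 = 0)
    (α : ℝ) (hα : α = min (Real.sqrt (-(deriv f 1))) (Real.sqrt (-(deriv f (-1))))) :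
    ∀ m : ℕ, ∃ C > (0 : ℝ), ∃ ρ₀ > (0 : ℝ),
      (∀ ρ : ℝ, ρ₀ ≤ ρ → |deriv^[m] (fun z => θ₀ z - 1) ρ| ≤ C * Real.exp (-α * ρ)) ∧
      (∀ ρ : ℝ, ρ ≤ -ρ₀ → |deriv^[m] (fun z => θ₀ z + 1) ρ| ≤ C * Real.exp (α * ρ)) := by
  intro m
  have hα0 : 0 < α := by
    rw [hα]
    exact lt_min (Real.sqrt_pos.mpr (by linarith)) (Real.sqrt_pos.mpr (by linarith))
  have heq' : ∀ ρ, deriv (deriv θ₀) ρ = -f (θ₀ ρ) := fun ρ => by linarith [hθ₀eq ρ]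
  have hα1 : α ^ 2 ≤ -deriv f 1 := by
    have h1 : α ≤ Real.sqrt (-deriv f 1) := by
      rw [hα]; exact min_le_left _ _
    calc α ^ 2 ≤ Real.sqrt (-deriv f 1) ^ 2 := by nlinarith
      _ = -deriv f 1 := Real.sq_sqrt (by linarith)
  obtain ⟨Cp, hCp, Rp, hRp, hbdp⟩ := main_decay f θ₀ hf hf1 hθ₀ran heq' hθ₀top α hα0 hα1 m
  -- reflected data
  have hderiv_comp : ∀ (F : ℝ → ℝ) (x : ℝ), deriv (fun u => -F (-u)) x = deriv F (-x) := by
    intro F x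
    rw [deriv.fun_neg (f := fun u => F (-u)), deriv_comp_neg]
    simp
  have hf2 : ContDiff ℝ (⊤ : ℕ∞) (fun u => -f (-u)) := (hf.comp contDiff_id.neg).neg
  have hf21 : (fun u => -f (-u)) 1 = 0 := by simpa using hfm1
  have hf2' : deriv (fun u => -f (-u)) 1 = deriv f (-1) := hderiv_comp f 1
  have hα2 : α ^ 2 ≤ -deriv (fun u => -f (-u)) 1 := by
    rw [hf2']
    have h1 : α ≤ Real.sqrt (-deriv f (-1)) := by
      rw [hα]; exact min_le_right _ _
    calc α ^ 2 ≤ Real.sqrt (-deriv f (-1)) ^ 2 := by nlinarith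
      _ = -deriv f (-1) := Real.sq_sqrt (by linarith)
  have hran2 : ∀ ρ, (fun ρ => -θ₀ (-ρ)) ρ ∈ Ioo (-1 : ℝ) 1 := by
    intro ρ
    obtain ⟨h1, h2⟩ := hθ₀ran (-ρ)
    exact ⟨by simp; linarith, by simp; linarith⟩
  have hgθ2 : deriv (fun ρ => -θ₀ (-ρ)) = fun ρ => deriv θ₀ (-ρ) :=
    funext fun ρ => hderiv_comp θ₀ ρ
  have heq2 : ∀ ρ, deriv (deriv (fun ρ => -θ₀ (-ρ))) ρ =
      -(fun u => -f (-u)) ((fun ρ => -θ₀ (-ρ)) ρ) := by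
    intro ρ
    rw [hgθ2, deriv_comp_neg, heq' (-ρ)]
    simp
  have htop2 : Tendsto (fun ρ => -θ₀ (-ρ)) atTop (𝓝 1) := by
    have h1 : Tendsto (fun ρ : ℝ => θ₀ (-ρ)) atTop (𝓝 (-1)) :=
      hθ₀bot.comp tendsto_neg_atTop_atBot
    have h2 := h1.neg
    simpa using h2
  obtain ⟨Cm, hCm, Rm, hRm, hbdm⟩ := main_decay (fun u => -f (-u)) (fun ρ => -θ₀ (-ρ))
    hf2 hf21 hran2 heq2 htop2 α hα0 hα2 m
  refine ⟨max Cp Cm, lt_of_lt_of_le hCp (le_max_left _ _),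
    max Rp Rm, lt_of_lt_of_le hRp (le_max_left _ _), ?_, ?_⟩
  · intro ρ hρ
    have hb := hbdp ρ (le_trans (le_max_left _ _) hρ)
    calc |deriv^[m] (fun z => θ₀ z - 1) ρ| ≤ Cp * Real.exp (-α * ρ) := hb
      _ ≤ max Cp Cm * Real.exp (-α * ρ) :=
          mul_le_mul_of_nonneg_right (le_max_left _ _) (Real.exp_pos _).le
  · intro ρ hρ
    have hσ : max Rp Rm ≤ -ρ := by linarith
    have hb := hbdm (-ρ) (le_trans (le_max_right _ _) hσ)
    have e1 : deriv^[m] (fun z => (fun ρ => -θ₀ (-ρ)) z - 1) (-ρ) =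
        -deriv^[m] (fun z => θ₀ (-z) + 1) (-ρ) := by
      have h1 : (fun z => (fun ρ => -θ₀ (-ρ)) z - 1) = (fun z => -(θ₀ (-z) + 1)) := by
        funext z; ring
      rw [h1]
      exact iter_deriv_neg m (fun z => θ₀ (-z) + 1) (-ρ)
    have e2 : deriv^[m] (fun z => θ₀ (-z) + 1) (-ρ) =
        (-1 : ℝ) ^ m * deriv^[m] (fun w => θ₀ w + 1) ρ := by
      have := iter_deriv_comp_neg m (fun w => θ₀ w + 1) (-ρ)
      rwa [neg_neg] at this
    rw [e1, e2, abs_neg, abs_mul, abs_pow, abs_neg, abs_one, one_pow, one_mul] at hb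
    rw [show -α * -ρ = α * ρ by ring] at hb
    calc |deriv^[m] (fun z => θ₀ z + 1) ρ| ≤ Cm * Real.exp (α * ρ) := hb
      _ ≤ max Cp Cm * Real.exp (α * ρ) :=
          mul_le_mul_of_nonneg_right (le_max_right _ _) (Real.exp_pos _).le
end

section
/- Let f : ℝ → ℝ be a C² function such that lim_{u→+∞} f(u) = −∞, lim_{u→−∞} f(u) = +∞, and there exists M > 0 with u f''(u) ≤ 0 for all |u| ≥ M. Let p ∈ (0,1]. Then for every C₀ > 0 there exists C = C(C₀, p) > 0 such that for all u ∈ ℝ with |u| ≤ C₀ and all R ∈ ℝ: ( f(u+R) − f(u) − f'(u) R ) · R ≤ C |R|^{p+2}. -/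
/-!
For `|R| ≤ 1` the Taylor remainder is `O(R²)` uniformly in `|u| ≤ C₀`, because `f'` is Lipschitz
on the compact interval `[-C₀ - 1, C₀ + 1]`; multiplied by `R` this is `O(|R|³)`, and
`|R|³ ≤ |R|^(p+2)` there. For `|R| ≥ 1` the limits of `f` at `±∞` make `f` bounded above on every
half-line `[a, ∞)` and below on every `(-∞, a]`, so `f (u + R) * R ≤ A |R|` with the sign of `R`
deciding which bound applies; the remaining terms `-f(u) R - f'(u) R²` are `O(R²)`, and both `|R|`
and `R²` are at most `|R|^(p+2)`.
-/

open Set Filter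
open scoped NNReal

theorem abs_sub_sub_deriv_mul_le_of_lipschitzOnWith {f : ℝ → ℝ} {s : Set ℝ} {K : ℝ≥0}
    (hs : Convex ℝ s) (hf : ∀ x ∈ s, DifferentiableAt ℝ f x)
    (hK : LipschitzOnWith K (deriv f) s) {u R : ℝ} (hu : u ∈ s) (huR : u + R ∈ s) :
    |f (u + R) - f u - deriv f u * R| ≤ K * R ^ 2 := by
  have hseg : uIcc u (u + R) ⊆ s := hs.ordConnected.uIcc_subset hu huR
  have hderiv : ∀ x ∈ uIcc u (u + R), HasDerivWithinAt (fun y ↦ f y - deriv f u * y)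
      (deriv f x - deriv f u) (uIcc u (u + R)) x := fun x hx ↦
    (((hf x (hseg hx)).hasDerivAt).sub ((hasDerivAt_id x).const_mul _)).hasDerivWithinAt.congr_deriv
      (by simp)
  have hbound : ∀ x ∈ uIcc u (u + R), ‖deriv f x - deriv f u‖ ≤ K * |R| := fun x hx ↦ calc
    ‖deriv f x - deriv f u‖ ≤ K * |x - u| := hK.dist_le_mul x (hseg hx) u hu
    _ ≤ K * |R| := by
      gcongr K * ?_
      simpa using abs_sub_left_of_mem_uIcc hx
  have := (convex_uIcc u (u + R)).norm_image_sub_le_of_norm_hasDerivWithin_le hderiv hbound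
    left_mem_uIcc right_mem_uIcc
  calc |f (u + R) - f u - deriv f u * R|
      = ‖(f (u + R) - deriv f u * (u + R)) - (f u - deriv f u * u)‖ := by
        rw [Real.norm_eq_abs]; ring_nf
    _ ≤ K * |R| * ‖u + R - u‖ := this
    _ = K * R ^ 2 := by rw [add_sub_cancel_left, Real.norm_eq_abs, mul_assoc, ← sq, sq_abs]

theorem Continuous.bddAbove_image_Ici_of_tendsto_atBot {f : ℝ → ℝ} (hf : Continuous f)
    (h : Tendsto f atTop atBot) (a : ℝ) : BddAbove (f '' Ici a) := by
  obtain ⟨T, hT⟩ := eventually_atTop.mp (h.eventually_le_atBot 0)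
  refine ((isCompact_Icc (a := a) (b := T)).bddAbove_image hf.continuousOn |>.union
    (bddAbove_Iic (a := 0))).mono ?_
  rintro _ ⟨x, hx, rfl⟩
  rcases le_total x T with hxT | hTx
  · exact .inl ⟨x, ⟨hx, hxT⟩, rfl⟩
  · exact .inr (hT x hTx)

theorem Continuous.bddBelow_image_Iic_of_tendsto_atTop {f : ℝ → ℝ} (hf : Continuous f)
    (h : Tendsto f atBot atTop) (a : ℝ) : BddBelow (f '' Iic a) := by
  have hneg : Tendsto (fun x ↦ -f (-x)) atTop atBot :=
    tendsto_neg_atTop_atBot.comp (h.comp tendsto_neg_atTop_atBot)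
  obtain ⟨A, hA⟩ := (hf.comp continuous_neg).neg.bddAbove_image_Ici_of_tendsto_atBot hneg (-a)
  refine ⟨-A, ?_⟩
  rintro _ ⟨x, hx, rfl⟩
  have : -f (- -x) ≤ A := hA ⟨-x, neg_le_neg (mem_Iic.mp hx), rfl⟩
  rw [neg_neg] at this
  linarith

theorem exists_apply_add_mul_le_mul_abs {f : ℝ → ℝ} (hf : Continuous f)
    (htop : Tendsto f atTop atBot) (hbot : Tendsto f atBot atTop) (c : ℝ) :
    ∃ A, 0 ≤ A ∧ ∀ u R, |u| ≤ c → f (u + R) * R ≤ A * |R| := by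
  obtain ⟨A₁, hA₁⟩ := hf.bddAbove_image_Ici_of_tendsto_atBot htop (-c)
  obtain ⟨A₂, hA₂⟩ := hf.bddBelow_image_Iic_of_tendsto_atTop hbot c
  refine ⟨max (max A₁ (-A₂)) 0, le_max_right _ _, fun u R hu ↦ ?_⟩
  have hA₁A := (le_max_left A₁ (-A₂)).trans (le_max_left _ 0)
  have hA₂A := (le_max_right A₁ (-A₂)).trans (le_max_left _ 0)
  obtain ⟨hcu, huc⟩ := abs_le.mp hu
  rcases le_total 0 R with hR | hR
  · have : f (u + R) ≤ A₁ := hA₁ ⟨u + R, mem_Ici.mpr (by linarith), rfl⟩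
    rw [abs_of_nonneg hR]
    nlinarith
  · have : A₂ ≤ f (u + R) := hA₂ ⟨u + R, mem_Iic.mpr (by linarith), rfl⟩
    rw [abs_of_nonpos hR]
    nlinarith

theorem mul_le_rpow_of_abs_le_sq {g R K p : ℝ} (hK : 0 ≤ K) (hp : p ≤ 1) (hR : |R| ≤ 1)
    (hg : |g| ≤ K * R ^ 2) : g * R ≤ K * |R| ^ (p + 2) := by
  rcases eq_or_ne R 0 with rfl | hR0
  · simpa using mul_nonneg hK (Real.rpow_nonneg le_rfl (p + 2))
  calc g * R ≤ |g| * |R| := (le_abs_self _).trans (abs_mul g R).le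
    _ ≤ K * R ^ 2 * |R| := by gcongr
    _ = K * |R| ^ (3 : ℝ) := by rw [← sq_abs, Real.rpow_ofNat]; ring
    _ ≤ K * |R| ^ (p + 2) := mul_le_mul_of_nonneg_left
      (Real.rpow_le_rpow_of_exponent_ge (abs_pos.mpr hR0) hR (by linarith)) hK

theorem sub_sub_mul_mul_le_rpow_of_one_le_abs {y z w R A B₀ B₁ p : ℝ} (hA : 0 ≤ A)
    (hy : y * R ≤ A * |R|) (hz : |z| ≤ B₀) (hw : |w| ≤ B₁) (hp : 0 ≤ p) (hR : 1 ≤ |R|) :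
    (y - z - w * R) * R ≤ (A + B₀ + B₁) * |R| ^ (p + 2) := by
  have h₁ : |R| ≤ |R| ^ (p + 2) := Real.self_le_rpow_of_one_le hR (by linarith)
  have h₂ : R ^ 2 ≤ |R| ^ (p + 2) := by
    rw [← sq_abs, ← Real.rpow_ofNat]
    exact Real.rpow_le_rpow_of_exponent_le hR (by linarith)
  have hz' : -(z * R) ≤ B₀ * |R| := (neg_le_abs _).trans <| by
    rw [abs_mul]; exact mul_le_mul_of_nonneg_right hz (abs_nonneg R)
  have hw' : -(w * R ^ 2) ≤ B₁ * R ^ 2 := (neg_le_abs _).trans <| by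
    rw [abs_mul, abs_of_nonneg (sq_nonneg R)]; exact mul_le_mul_of_nonneg_right hw (sq_nonneg R)
  have hB₀ : 0 ≤ B₀ := (abs_nonneg z).trans hz
  have hB₁ : 0 ≤ B₁ := (abs_nonneg w).trans hw
  calc (y - z - w * R) * R = y * R - z * R - w * R ^ 2 := by ring
    _ ≤ (A + B₀) * |R| + B₁ * R ^ 2 := by linarith
    _ ≤ (A + B₀) * |R| ^ (p + 2) + B₁ * |R| ^ (p + 2) := by gcongr
    _ = (A + B₀ + B₁) * |R| ^ (p + 2) := by ring

theorem stmt_10_general (f : ℝ → ℝ) (hf : ContDiff ℝ 2 f)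
    (htop : Tendsto f atTop atBot) (hbot : Tendsto f atBot atTop)
    (p : ℝ) (hp0 : 0 < p) (hp1 : p ≤ 1) :
    ∀ C₀ > (0 : ℝ), ∃ C > (0 : ℝ), ∀ u R : ℝ, |u| ≤ C₀ →
      (f (u + R) - f u - deriv f u * R) * R ≤ C * |R| ^ (p + 2) := by
  intro C₀ hC₀
  have hf₁ : Differentiable ℝ f := hf.differentiable two_ne_zero
  have hdf : ContDiff ℝ 1 (deriv f) := hf.iterate_deriv' 1 1
  obtain ⟨K, hK⟩ := hdf.contDiffOn.exists_lipschitzOnWith one_ne_zero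
    (convex_Icc (-(C₀ + 1)) (C₀ + 1)) isCompact_Icc
  obtain ⟨A, hA, hfA⟩ := exists_apply_add_mul_le_mul_abs hf₁.continuous htop hbot C₀
  obtain ⟨B₀, hB₀⟩ := (isCompact_closedBall (0 : ℝ) C₀).exists_bound_of_continuousOn
    hf₁.continuous.continuousOn
  obtain ⟨B₁, hB₁⟩ := (isCompact_closedBall (0 : ℝ) C₀).exists_bound_of_continuousOn
    hdf.continuous.continuousOn
  have hball : (0 : ℝ) ∈ Metric.closedBall 0 C₀ := Metric.mem_closedBall_self hC₀.le
  have hB₀_nonneg : 0 ≤ B₀ := (norm_nonneg _).trans (hB₀ 0 hball)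
  have hB₁_nonneg : 0 ≤ B₁ := (norm_nonneg _).trans (hB₁ 0 hball)
  refine ⟨K + A + B₀ + B₁ + 1, by positivity, fun u R hu ↦ ?_⟩
  have hu' : u ∈ Metric.closedBall 0 C₀ := mem_closedBall_zero_iff.mpr hu
  rcases le_total |R| 1 with hR | hR
  · obtain ⟨hu₁, hu₂⟩ := abs_le.mp hu
    obtain ⟨hR₁, hR₂⟩ := abs_le.mp hR
    have hTaylor := abs_sub_sub_deriv_mul_le_of_lipschitzOnWith (convex_Icc _ _)
      (fun x _ ↦ hf₁ x) hK (u := u) (R := R) ⟨by linarith, by linarith⟩ ⟨by linarith, by linarith⟩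
    calc _ ≤ K * |R| ^ (p + 2) := mul_le_rpow_of_abs_le_sq K.2 hp1 hR hTaylor
      _ ≤ _ := by gcongr ?_ * _; linarith
  · calc _ ≤ (A + B₀ + B₁) * |R| ^ (p + 2) := sub_sub_mul_mul_le_rpow_of_one_le_abs hA
          (hfA u R hu) (hB₀ u hu') (hB₁ u hu') hp0.le hR
      _ ≤ _ := by gcongr ?_ * _; linarith [K.2]

/-- One-sided control of the Taylor remainder of the (modified)
Allen-Cahn nonlinearity: if `f` is `C²`, `f(u) → ∓∞` as `u → ±∞` and `u f''(u) ≤ 0` for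
`|u| ≥ M`, then for every `C₀ > 0` there is `C > 0` such that for `|u| ≤ C₀` and all `R`,
`(f(u+R) - f(u) - f'(u)R)·R ≤ C |R|^{p+2}`. -/
theorem stmt_10 (f : ℝ → ℝ) (hf : ContDiff ℝ 2 f)
    (htop : Tendsto f atTop atBot) (hbot : Tendsto f atBot atTop)
    (M : ℝ) (hM : 0 < M) (hconc : ∀ u : ℝ, M ≤ |u| → u * iteratedDeriv 2 f u ≤ 0)
    (p : ℝ) (hp0 : 0 < p) (hp1 : p ≤ 1) :
    ∀ C₀ > (0 : ℝ), ∃ C > (0 : ℝ), ∀ u R : ℝ, |u| ≤ C₀ →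
      (f (u + R) - f u - deriv f u * R) * R ≤ C * |R| ^ (p + 2) :=
  stmt_10_general f hf htop hbot p hp0 hp1
end
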